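/- For any complex numbers v_1,…,v_n, |∏_{k=1}^n (1+v_k)e^{−v_k} − exp(−(1/2)∑_{k=1}^n v_k²)| ≤ (c₂ V₃ + V₄/8) e^{V₂/2}, where V_m = ∑_{k=1}^n |v_k|^m and c₂ = (1/2)∫_0^1 e^{t²/2}(1−t²) dt. -/

import Mathlib

open MeasureTheory intervalIntegral Finset

noncomputable section CLTaux

private def Gfun (t : ℝ) : ℝ := ∫ s in (0:ℝ)..t, Real.exp (s ^ 2 / 2)

private lemma contExpSq : Continuous (fun s : ℝ => Real.exp (s ^ 2 / 2)) := by fun_prop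

private lemma hasDerivAt_G (t : ℝ) : HasDerivAt Gfun (Real.exp (t ^ 2 / 2)) t :=
  intervalIntegral.integral_hasDerivAt_right (contExpSq.intervalIntegrable _ _)
    (contExpSq.stronglyMeasurableAtFilter _ _) contExpSq.continuousAt

private lemma contG : Continuous Gfun :=
  continuous_iff_continuousAt.2 fun t => (hasDerivAt_G t).continuousAt

private lemma G_nonneg {t : ℝ} (ht : 0 ≤ t) : 0 ≤ Gfun t :=
  intervalIntegral.integral_nonneg ht (fun u _ => (Real.exp_pos _).le)

private lemma hasDerivAt_exp_mul (w : ℂ) (s : ℝ) :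
    HasDerivAt (fun s : ℝ => Complex.exp (s * w)) (w * Complex.exp (s * w)) s := by
  have h : HasDerivAt (fun s : ℝ => (s : ℂ) * w) w s := by
    simpa using (Complex.ofRealCLM.hasDerivAt (x := s)).mul_const w
  simpa [mul_comm] using h.cexp

private lemma exp_sub_one_eq (w : ℂ) (t : ℝ) :
    Complex.exp (t * w) - 1 = ∫ s in (0:ℝ)..t, w * Complex.exp (s * w) := by
  rw [intervalIntegral.integral_eq_sub_of_hasDerivAt
    (f := fun s : ℝ => Complex.exp (s * w)) (fun s _ => hasDerivAt_exp_mul w s)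
    ((by fun_prop : Continuous fun s : ℝ => w * Complex.exp (s * w)).intervalIntegrable _ _)]
  simp

private lemma norm_exp_sub_one_le (w : ℂ) {t : ℝ} (ht : 0 ≤ t) {g : ℝ → ℝ}
    (hg : Continuous g) (hbound : ∀ s ∈ Set.Icc 0 t, ‖w‖ * Real.exp (s * ‖w‖) ≤ g s) :
    ‖Complex.exp (t * w) - 1‖ ≤ ∫ s in (0:ℝ)..t, g s := by
  rw [exp_sub_one_eq]
  refine le_trans (intervalIntegral.norm_integral_le_integral_norm ht) ?_
  refine intervalIntegral.integral_mono_on ht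
    ((by fun_prop : Continuous fun s : ℝ => ‖w * Complex.exp (s * w)‖).intervalIntegrable _ _)
    (hg.intervalIntegrable _ _) (fun s hs => le_trans ?_ (hbound s hs))
  rw [norm_mul, Complex.norm_exp]
  have h1 : ((s : ℂ) * w).re ≤ s * ‖w‖ := by
    rw [Complex.mul_re]
    simp only [Complex.ofReal_re, Complex.ofReal_im, zero_mul, sub_zero]
    have := Complex.re_le_norm w
    have hw : w.re ≤ ‖w‖ := by exact this
    nlinarith [hs.1]
  exact mul_le_mul_of_nonneg_left (Real.exp_le_exp.2 h1) (norm_nonneg w)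

/-- first usage : `‖exp (t w) - 1‖ ≤ t ‖w‖ e^{‖w‖}` for `t ∈ [0,1]`. -/
private lemma norm_exp_sub_one_le' (w : ℂ) {t : ℝ} (ht : 0 ≤ t) (ht1 : t ≤ 1) :
    ‖Complex.exp (t * w) - 1‖ ≤ t * (‖w‖ * Real.exp ‖w‖) := by
  have h := norm_exp_sub_one_le w ht (g := fun _ => ‖w‖ * Real.exp ‖w‖) (by fun_prop) ?_
  · simpa [mul_comm, mul_left_comm] using h
  · intro s hs
    have : s * ‖w‖ ≤ ‖w‖ := by
      nlinarith [norm_nonneg w, hs.1, hs.2, ht1]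
    exact mul_le_mul_of_nonneg_left (Real.exp_le_exp.2 this) (norm_nonneg w)

/-- second usage : `‖exp (-t z) - 1‖ ≤ ‖z‖ e^{‖z‖²/2} G t` for `t ≥ 0`. -/
private lemma norm_exp_sub_one_le'' (z : ℂ) {t : ℝ} (ht : 0 ≤ t) :
    ‖Complex.exp (t * (-z)) - 1‖ ≤ ‖z‖ * Real.exp (‖z‖ ^ 2 / 2) * Gfun t := by
  have h := norm_exp_sub_one_le (-z) ht
    (g := fun s => ‖z‖ * Real.exp (‖z‖ ^ 2 / 2) * Real.exp (s ^ 2 / 2)) (by fun_prop) ?_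
  · calc ‖Complex.exp (t * (-z)) - 1‖
        ≤ ∫ s in (0:ℝ)..t, ‖z‖ * Real.exp (‖z‖ ^ 2 / 2) * Real.exp (s ^ 2 / 2) := h
      _ = ‖z‖ * Real.exp (‖z‖ ^ 2 / 2) * Gfun t := by
          rw [intervalIntegral.integral_const_mul]; rfl
  · intro s hs
    rw [norm_neg, mul_assoc, ← Real.exp_add]
    have : s * ‖z‖ ≤ ‖z‖ ^ 2 / 2 + s ^ 2 / 2 := by nlinarith [sq_nonneg (s - ‖z‖)]
    exact mul_le_mul_of_nonneg_left (Real.exp_le_exp.2 this) (norm_nonneg z)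

private lemma R2_bound (w : ℂ) : ‖Complex.exp w - 1 - w‖ ≤ ‖w‖ ^ 2 / 2 * Real.exp ‖w‖ := by
  have hid : Complex.exp w - 1 - w = ∫ s in (0:ℝ)..1, w * (Complex.exp (s * w) - 1) := by
    rw [intervalIntegral.integral_eq_sub_of_hasDerivAt
      (f := fun s : ℝ => Complex.exp (s * w) - s * w)
      (f' := fun s : ℝ => w * (Complex.exp (s * w) - 1)) ?_
      ((by fun_prop : Continuous fun s : ℝ => w * (Complex.exp (s * w) - 1)).intervalIntegrable _ _)]
    · simp; ring
    · intro s _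
      have h1 := hasDerivAt_exp_mul w s
      have h2 : HasDerivAt (fun s : ℝ => (s : ℂ) * w) w s := by
        simpa using (Complex.ofRealCLM.hasDerivAt (x := s)).mul_const w
      have := h1.sub h2
      exact this.congr_deriv (by ring)
  rw [hid]
  refine le_trans (intervalIntegral.norm_integral_le_integral_norm zero_le_one) ?_
  have hmono : ∫ s in (0:ℝ)..1, ‖w * (Complex.exp (s * w) - 1)‖
      ≤ ∫ s in (0:ℝ)..1, (‖w‖ * (‖w‖ * Real.exp ‖w‖)) * s := by
    refine intervalIntegral.integral_mono_on zero_le_one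
      ((by fun_prop : Continuous fun s : ℝ => ‖w * (Complex.exp (s * w) - 1)‖).intervalIntegrable _ _)
      ((by fun_prop : Continuous fun s : ℝ => (‖w‖ * (‖w‖ * Real.exp ‖w‖)) * s).intervalIntegrable _ _)
      (fun s hs => ?_)
    rw [norm_mul]
    calc ‖w‖ * ‖Complex.exp (s * w) - 1‖ ≤ ‖w‖ * (s * (‖w‖ * Real.exp ‖w‖)) :=
          mul_le_mul_of_nonneg_left (norm_exp_sub_one_le' w hs.1 hs.2) (norm_nonneg w)
      _ = (‖w‖ * (‖w‖ * Real.exp ‖w‖)) * s := by ring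
  refine le_trans hmono ?_
  rw [intervalIntegral.integral_const_mul, integral_id]
  ring_nf
  nlinarith [norm_nonneg w, Real.exp_pos ‖w‖]

private lemma R1_bound (z : ℂ) :
    ‖(1 + z) * Complex.exp (-z) - 1 + z ^ 2 / 2‖
      ≤ (∫ t in (0:ℝ)..1, t * Gfun t) * ‖z‖ ^ 3 * Real.exp (‖z‖ ^ 2 / 2) := by
  have hid : (1 + z) * Complex.exp (-z) - 1 + z ^ 2 / 2
      = ∫ t in (0:ℝ)..1, (t : ℂ) * z ^ 2 * (1 - Complex.exp (t * (-z))) := by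
    rw [intervalIntegral.integral_eq_sub_of_hasDerivAt
      (f := fun t : ℝ => (1 + t * z) * Complex.exp (t * (-z)) + ((t ^ 2 : ℝ) : ℂ) * (z ^ 2 / 2))
      (f' := fun t : ℝ => (t : ℂ) * z ^ 2 * (1 - Complex.exp (t * (-z)))) ?_
      ((by fun_prop : Continuous fun t : ℝ =>
        (t : ℂ) * z ^ 2 * (1 - Complex.exp (t * (-z)))).intervalIntegrable _ _)]
    · push_cast
      simp only [Complex.ofReal_one, Complex.ofReal_zero, one_mul, zero_mul, one_pow,
        Complex.exp_zero, mul_one, add_zero, zero_add]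
      ring_nf
    · intro t _
      have h1 : HasDerivAt (fun t : ℝ => 1 + (t : ℂ) * z) z t := by
        simpa using ((Complex.ofRealCLM.hasDerivAt (x := t)).mul_const z).const_add 1
      have h2 := hasDerivAt_exp_mul (-z) t
      have h3 : HasDerivAt (fun t : ℝ => ((t ^ 2 : ℝ) : ℂ) * (z ^ 2 / 2))
          (((2 * t : ℝ) : ℂ) * (z ^ 2 / 2)) t := by
        exact (((hasDerivAt_pow 2 t).ofReal_comp).mul_const _).congr_deriv (by push_cast; ring)
      have := (h1.mul h2).add h3
      exact this.congr_deriv (by push_cast; ring)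
  rw [hid]
  refine le_trans (intervalIntegral.norm_integral_le_integral_norm zero_le_one) ?_
  have hmono : ∫ t in (0:ℝ)..1, ‖(t : ℂ) * z ^ 2 * (1 - Complex.exp (t * (-z)))‖
      ≤ ∫ t in (0:ℝ)..1, (‖z‖ ^ 3 * Real.exp (‖z‖ ^ 2 / 2)) * (t * Gfun t) := by
    refine intervalIntegral.integral_mono_on zero_le_one
      ((by fun_prop : Continuous fun t : ℝ =>
        ‖(t : ℂ) * z ^ 2 * (1 - Complex.exp (t * (-z)))‖).intervalIntegrable _ _)
      ((continuous_const.mul (continuous_id.mul contG)).intervalIntegrable _ _)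
      (fun t hs => ?_)
    rw [norm_mul, norm_mul, norm_pow]
    have hcast : ‖(t : ℂ)‖ = t := by
      rw [Complex.norm_real, Real.norm_of_nonneg hs.1]
    rw [hcast, norm_sub_rev]
    calc t * ‖z‖ ^ 2 * ‖Complex.exp (↑t * -z) - 1‖
        ≤ t * ‖z‖ ^ 2 * (‖z‖ * Real.exp (‖z‖ ^ 2 / 2) * Gfun t) := by
          exact mul_le_mul_of_nonneg_left (norm_exp_sub_one_le'' z hs.1)
            (mul_nonneg hs.1 (by positivity))
      _ = (‖z‖ ^ 3 * Real.exp (‖z‖ ^ 2 / 2)) * (t * Gfun t) := by ring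
  refine le_trans hmono ?_
  rw [intervalIntegral.integral_const_mul]
  exact le_of_eq (by ring)

private lemma G_val : ∫ t in (0:ℝ)..1, t * Gfun t
    = (1 / 2) * ∫ t in (0:ℝ)..1, Real.exp (t ^ 2 / 2) * (1 - t ^ 2) := by
  have hderiv : ∀ t ∈ Set.uIcc (0:ℝ) 1, HasDerivAt (fun t : ℝ => t ^ 2 / 2 * Gfun t)
      (t * Gfun t + t ^ 2 / 2 * Real.exp (t ^ 2 / 2)) t := by
    intro t _
    have h1 : HasDerivAt (fun t : ℝ => t ^ 2 / 2) t t := by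
      simpa using (hasDerivAt_pow 2 t).div_const 2
    exact h1.mul (hasDerivAt_G t)
  have hint1 : IntervalIntegrable (fun t : ℝ => t * Gfun t) volume 0 1 :=
    (continuous_id.mul contG).intervalIntegrable _ _
  have hint2 : IntervalIntegrable (fun t : ℝ => t ^ 2 / 2 * Real.exp (t ^ 2 / 2)) volume 0 1 :=
    (by fun_prop : Continuous fun t : ℝ => t ^ 2 / 2 * Real.exp (t ^ 2 / 2)).intervalIntegrable _ _
  have hftc := intervalIntegral.integral_eq_sub_of_hasDerivAt hderiv (hint1.add hint2)
  rw [intervalIntegral.integral_add hint1 hint2] at hftc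
  norm_num at hftc
  -- hftc : ∫ t*G + ∫ t²/2 e = 1/2 * ∫ e - 0
  have e1 : ∫ t in (0:ℝ)..1, Real.exp (t ^ 2 / 2) * (1 - t ^ 2)
      = (∫ t in (0:ℝ)..1, Real.exp (t ^ 2 / 2)) - ∫ t in (0:ℝ)..1, t ^ 2 * Real.exp (t ^ 2 / 2) := by
    rw [← intervalIntegral.integral_sub (contExpSq.intervalIntegrable _ _)
      ((by fun_prop : Continuous fun t : ℝ => t ^ 2 * Real.exp (t ^ 2 / 2)).intervalIntegrable _ _)]
    congr 1; funext t; ring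
  have e2 : ∫ t in (0:ℝ)..1, t ^ 2 / 2 * Real.exp (t ^ 2 / 2)
      = (1/2) * ∫ t in (0:ℝ)..1, t ^ 2 * Real.exp (t ^ 2 / 2) := by
    rw [← intervalIntegral.integral_const_mul]
    congr 1; funext t; ring
  rw [e2] at hftc
  rw [e1]
  have : Gfun 1 = ∫ t in (0:ℝ)..1, Real.exp (t ^ 2 / 2) := rfl
  linarith [hftc]

private lemma c2_nonneg : 0 ≤ (1 / 2) * ∫ t in (0:ℝ)..1, Real.exp (t ^ 2 / 2) * (1 - t ^ 2) := by
  have h : 0 ≤ ∫ t in (0:ℝ)..1, Real.exp (t ^ 2 / 2) * (1 - t ^ 2) :=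
    intervalIntegral.integral_nonneg zero_le_one (fun u hu => mul_nonneg (Real.exp_pos _).le (by nlinarith [hu.1, hu.2]))
  linarith

private lemma factor_bound (z : ℂ) :
    ‖(1 + z) * Complex.exp (-z) - Complex.exp (-(z ^ 2) / 2)‖
      ≤ (((1 / 2) * ∫ t in (0:ℝ)..1, Real.exp (t ^ 2 / 2) * (1 - t ^ 2)) * ‖z‖ ^ 3
          + ‖z‖ ^ 4 / 8) * Real.exp (‖z‖ ^ 2 / 2) := by
  have hsplit : (1 + z) * Complex.exp (-z) - Complex.exp (-(z ^ 2) / 2)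
      = ((1 + z) * Complex.exp (-z) - 1 + z ^ 2 / 2)
        - (Complex.exp (-(z ^ 2) / 2) - 1 - (-(z ^ 2) / 2)) := by ring
  rw [hsplit]
  refine le_trans (norm_sub_le _ _) ?_
  have h1 := R1_bound z
  rw [G_val] at h1
  have h2 := R2_bound (-(z ^ 2) / 2)
  have hw : ‖-(z ^ 2) / 2‖ = ‖z‖ ^ 2 / 2 := by
    rw [norm_div, norm_neg, norm_pow]
    norm_num
  rw [hw] at h2
  calc ‖(1 + z) * Complex.exp (-z) - 1 + z ^ 2 / 2‖
        + ‖Complex.exp (-(z ^ 2) / 2) - 1 - (-(z ^ 2) / 2)‖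
      ≤ ((1 / 2) * ∫ t in (0:ℝ)..1, Real.exp (t ^ 2 / 2) * (1 - t ^ 2)) * ‖z‖ ^ 3
            * Real.exp (‖z‖ ^ 2 / 2)
          + (‖z‖ ^ 2 / 2) ^ 2 / 2 * Real.exp (‖z‖ ^ 2 / 2) := add_le_add h1 h2
    _ = (((1 / 2) * ∫ t in (0:ℝ)..1, Real.exp (t ^ 2 / 2) * (1 - t ^ 2)) * ‖z‖ ^ 3
          + ‖z‖ ^ 4 / 8) * Real.exp (‖z‖ ^ 2 / 2) := by ring

private lemma norm_f_le (z : ℂ) :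
    ‖(1 + z) * Complex.exp (-z)‖ ≤ Real.exp (‖z‖ ^ 2 / 2) := by
  rw [norm_mul, Complex.norm_exp]
  have hsq : ‖1 + z‖ ^ 2 = 1 + 2 * z.re + ‖z‖ ^ 2 := by
    rw [Complex.sq_norm, Complex.sq_norm,
      Complex.normSq_apply, Complex.normSq_apply]
    simp only [Complex.add_re, Complex.add_im, Complex.one_re, Complex.one_im]
    ring
  have hB : Real.exp (z.re + ‖z‖ ^ 2 / 2) ^ 2 = Real.exp (2 * z.re + ‖z‖ ^ 2) := by
    rw [sq, ← Real.exp_add]; ring_nf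
  have h1a : (2 * z.re + ‖z‖ ^ 2) + 1 ≤ Real.exp (2 * z.re + ‖z‖ ^ 2) :=
    Real.add_one_le_exp _
  have h : ‖1 + z‖ ≤ Real.exp (z.re + ‖z‖ ^ 2 / 2) := by
    nlinarith [norm_nonneg (1 + z), Real.exp_pos (z.re + ‖z‖ ^ 2 / 2)]
  calc ‖1 + z‖ * Real.exp ((-z).re)
      ≤ Real.exp (z.re + ‖z‖ ^ 2 / 2) * Real.exp ((-z).re) :=
        mul_le_mul_of_nonneg_right h (Real.exp_pos _).le
    _ = Real.exp (‖z‖ ^ 2 / 2) := by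
        rw [← Real.exp_add, Complex.neg_re]; congr 1; ring

private lemma norm_g_le (z : ℂ) :
    ‖Complex.exp (-(z ^ 2) / 2)‖ ≤ Real.exp (‖z‖ ^ 2 / 2) := by
  rw [Complex.norm_exp]
  refine Real.exp_le_exp.2 ?_
  have := Complex.re_le_norm (-(z ^ 2) / 2)
  have hw : ‖(-(z ^ 2) / 2)‖ = ‖z‖ ^ 2 / 2 := by
    rw [norm_div, norm_neg, norm_pow]
    norm_num
  linarith [hw ▸ this]

private lemma telescope (f g : ℕ → ℂ) (M d : ℕ → ℝ)
    (hf : ∀ k, ‖f k‖ ≤ M k) (hg : ∀ k, ‖g k‖ ≤ M k)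
    (hfg : ∀ k, ‖f k - g k‖ ≤ d k * M k) (hd : ∀ k, 0 ≤ d k) :
    ∀ n, ‖(∏ k ∈ range n, f k) - ∏ k ∈ range n, g k‖
      ≤ (∑ k ∈ range n, d k) * ∏ k ∈ range n, M k := by
  intro n
  induction n with
  | zero => simp
  | succ n ih =>
    have hM0 : ∀ k, 0 ≤ M k := fun k => le_trans (norm_nonneg _) (hf k)
    have hPf : ‖∏ k ∈ range n, f k‖ ≤ ∏ k ∈ range n, M k := by
      rw [norm_prod]
      exact Finset.prod_le_prod (fun k _ => norm_nonneg _) (fun k _ => hf k)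
    have hprodM : 0 ≤ ∏ k ∈ range n, M k := Finset.prod_nonneg fun k _ => hM0 k
    have hsum : 0 ≤ ∑ k ∈ range n, d k := Finset.sum_nonneg fun k _ => hd k
    rw [prod_range_succ, prod_range_succ, prod_range_succ, sum_range_succ]
    have key : (∏ k ∈ range n, f k) * f n - (∏ k ∈ range n, g k) * g n
        = (∏ k ∈ range n, f k) * (f n - g n)
          + ((∏ k ∈ range n, f k) - ∏ k ∈ range n, g k) * g n := by ring
    rw [key]
    refine le_trans (norm_add_le _ _) ?_
    rw [norm_mul, norm_mul]
    have t1 : ‖∏ k ∈ range n, f k‖ * ‖f n - g n‖ ≤ (∏ k ∈ range n, M k) * (d n * M n) :=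
      mul_le_mul hPf (hfg n) (norm_nonneg _) hprodM
    have t2 : ‖(∏ k ∈ range n, f k) - ∏ k ∈ range n, g k‖ * ‖g n‖
        ≤ ((∑ k ∈ range n, d k) * ∏ k ∈ range n, M k) * M n :=
      mul_le_mul ih (hg n) (norm_nonneg _) (mul_nonneg hsum hprodM)
    refine le_trans (add_le_add t1 t2) (le_of_eq (by ring))

end CLTaux

theorem prod_one_add_mul_exp_neg_signed_measure_bound (n : ℕ) (v : ℕ → ℂ) :
    ‖∏ k ∈ Finset.range n, (1 + v k) * Complex.exp (-v k)
        - Complex.exp (-(1 / 2) * ∑ k ∈ Finset.range n, v k ^ 2)‖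
      ≤ (((1 / 2) * ∫ t in (0:ℝ)..1, Real.exp (t ^ 2 / 2) * (1 - t ^ 2))
            * (∑ k ∈ Finset.range n, ‖v k‖ ^ 3)
          + (∑ k ∈ Finset.range n, ‖v k‖ ^ 4) / 8)
          * Real.exp ((∑ k ∈ Finset.range n, ‖v k‖ ^ 2) / 2) := by
  have hrw : Complex.exp (-(1 / 2) * ∑ k ∈ Finset.range n, v k ^ 2)
      = ∏ k ∈ Finset.range n, Complex.exp (-(v k ^ 2) / 2) := by
    rw [← Complex.exp_sum]
    congr 1
    rw [Finset.mul_sum]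
    exact Finset.sum_congr rfl fun k _ => by ring
  rw [hrw]
  set c2 := (1 / 2) * ∫ t in (0:ℝ)..1, Real.exp (t ^ 2 / 2) * (1 - t ^ 2) with hc2
  have htel := telescope (fun k => (1 + v k) * Complex.exp (-v k))
      (fun k => Complex.exp (-(v k ^ 2) / 2))
      (fun k => Real.exp (‖v k‖ ^ 2 / 2))
      (fun k => c2 * ‖v k‖ ^ 3 + ‖v k‖ ^ 4 / 8)
      (fun k => norm_f_le (v k)) (fun k => norm_g_le (v k))
      (fun k => by
        have := factor_bound (v k)
        rw [← hc2] at this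
        exact le_trans this (le_of_eq (by ring)))
      (fun k => add_nonneg (mul_nonneg c2_nonneg (by positivity)) (by positivity)) n
  refine le_trans htel (le_of_eq ?_)
  rw [← Real.exp_sum]
  congr 1
  · rw [Finset.sum_add_distrib, ← Finset.mul_sum, ← Finset.sum_div]
  · rw [← Finset.sum_div]
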